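/- Let p be a prime, n = d_m p^m + e_m with d_m ≥ 0 and 0 ≤ e_m < p^m, and α a partition of n. If the p^m-weight of α is not equal to d_m for some m ≥ 0, then p divides the degree of the irreducible character χ^α of S_n. -/

import Mathlib

/-- A partition: a weakly decreasing list of positive integers. -/
def IsPartition (l : List ℕ) : Prop :=
  l.Pairwise (· ≥ ·) ∧ ∀ x ∈ l, 0 < x

/-- A partition of `n`. -/
def IsPartitionOf (n : ℕ) (l : List ℕ) : Prop :=
  IsPartition l ∧ l.sum = n

/-- The β-set of the partition `l` consisting of `m` beta-numbers
(first-column hook lengths, padding `l` with zero parts up to length `m`). -/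
def betaSetN (l : List ℕ) (m : ℕ) : Finset ℕ :=
  (Finset.range m).image (fun i => l.getD i 0 + (m - 1 - i))

/-- The canonical β-set of a partition. -/
def betaSet (l : List ℕ) : Finset ℕ := betaSetN l l.length

/-- The Murnaghan–Nakayama recursion, computing the character value of the
partition with β-set `B` on the cycle type given by the list.  Removing a
`k`-hook corresponds to replacing a beta-number `x` by `x - k`, with sign
`(-1)` to the number of beta-numbers strictly between `x - k` and `x`
(the leg length of the hook). -/
def MN : List ℕ → Finset ℕ → ℤ
  | [], _ => 1
  | k :: μ, B =>
    ∑ x ∈ B.filter (fun x => k ≤ x ∧ x - k ∉ B),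
      (-1) ^ (B.filter (fun y => x - k < y ∧ y < x)).card * MN μ (insert (x - k) (B.erase x))

/-- `charVal α μ` is the value `χ^α_μ` of the irreducible character of the
symmetric group labeled by the partition `α` on the class of cycle type `μ`. -/
def charVal (α μ : List ℕ) : ℤ := MN μ (betaSet α)

/-- The degree of the irreducible character labeled by `α`
(its value on the identity). -/
def charDegree (α : List ℕ) : ℤ := charVal α (List.replicate α.sum 1)

/-- The `r`-weight of a partition: the number of `r`-hooks removed in passing
to the `r`-core, computed on the abacus. -/
def wt (r : ℕ) (α : List ℕ) : ℕ :=
  (∑ x ∈ betaSet α, x / r) -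
    ∑ j ∈ Finset.range r, Nat.choose ((betaSet α).filter (fun x => x % r = j)).card 2

/-- The hook length `h_{i,j}(α)` of the node `(i,j)` (1-indexed). -/
def hookLen (α : List ℕ) (i j : ℕ) : ℤ :=
  (α.getD (i - 1) 0 : ℤ) + ((α.filter (fun a => j ≤ a)).length : ℤ) - i - j + 1

/-- `RemoveHook k α β`: the partition `β` is obtained from `α` by removing a
single hook of length `k`. -/
def RemoveHook (k : ℕ) (α β : List ℕ) : Prop :=
  ∃ m, α.length ≤ m ∧ β.length ≤ m ∧ ∃ x ∈ betaSetN α m,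
    k ≤ x ∧ x - k ∉ betaSetN α m ∧
    betaSetN β m = insert (x - k) ((betaSetN α m).erase x)

/-- `RemoveHooksSeq ks α β`: `β` is obtained from `α` by successively removing
hooks of lengths given, in order, by the list `ks`. -/
def RemoveHooksSeq : List ℕ → List ℕ → List ℕ → Prop
  | [], α, β => α = β
  | k :: ks, α, β => ∃ γ, IsPartition γ ∧ RemoveHook k α γ ∧ RemoveHooksSeq ks γ β

/-- The partition `λ_{n,p} = ((p^k)^{a_k}, …, 1^{a_0})` where
`n = a_k p^k + … + a_0` is the `p`-adic expansion of `n`. -/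
def padicType (p n : ℕ) : List ℕ :=
  ((List.range (Nat.digits p n).length).reverse).flatMap
    (fun i => List.replicate ((Nat.digits p n).getD i 0) (p ^ i))

/-- A cycle type `μ` of `S_n` is `p`-vanishing if every irreducible character
of `S_n` of degree divisible by `p` vanishes on the class of cycle type `μ`. -/
def PVanishing (p n : ℕ) (μ : List ℕ) : Prop :=
  ∀ α : List ℕ, IsPartitionOf n α → (p : ℤ) ∣ charDegree α → charVal α μ = 0

/-!
By Frobenius' formula in β-set form, `f^α · ∏_{x ∈ B} x! = n! · ∏_{a < b in B} (b - a)` for the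
β-set `B` of `α`; it follows by induction on `n` from the Murnaghan–Nakayama rule for a `1`-cycle,
the inductive step being a Lagrange interpolation identity. Taking `p`-adic valuations and sorting
the beads of `B` onto the runners of the `p^i`-abacus gives Macdonald's formula
`v_p(f^α) = ∑_{i ≥ 1} (⌊n / p^i⌋ - w_{p^i}(α))`. Every summand is nonnegative, since sliding all
beads to the top of their runners leaves an `r`-core of size `n - r · w_r(α)`, and the summand for
`i = m` is positive by hypothesis (`m = 0` is impossible, as `w_1(α) = n`).
-/

open Finset Polynomial Lagrange
open scoped Nat

theorem Nat.succ_choose_two (n : ℕ) : (n + 1).choose 2 = n + n.choose 2 := by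
  rw [Nat.choose_succ_succ', Nat.choose_one_right]

section DistinctNaturals

theorem choose_card_two_le_sum (B : Finset ℕ) : (#B).choose 2 ≤ ∑ x ∈ B, x := by
  induction B using Finset.induction_on_max with
  | empty => simp
  | insert a s hlt ih =>
    have hsa : #s ≤ a := by simpa using card_le_card (fun x hx => mem_range.2 (hlt x hx))
    rw [card_insert_of_notMem (fun h => (hlt a h).false), sum_insert (fun h => (hlt a h).false),
      Nat.succ_choose_two]
    omega

theorem eq_range_of_sum_eq_choose_card_two {B : Finset ℕ} (h : ∑ x ∈ B, x = (#B).choose 2) :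
    B = range #B := by
  induction B using Finset.induction_on_max with
  | empty => simp
  | insert a s hlt ih =>
    have has : a ∉ s := fun h => (hlt a h).false
    have hsa : #s ≤ a := by simpa using card_le_card (fun x hx => mem_range.2 (hlt x hx))
    have hs := choose_card_two_le_sum s
    rw [card_insert_of_notMem has, sum_insert has, Nat.succ_choose_two] at h
    rw [card_insert_of_notMem has, ih (by omega), card_range, show a = #s by omega,
      range_add_one]

theorem choose_card_two_le_sum_of_injOn {ι : Type*} {s : Finset ι} {f : ι → ℕ}
    (hf : Set.InjOn f s) : (#s).choose 2 ≤ ∑ i ∈ s, f i := by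
  classical
  simpa [card_image_of_injOn hf, sum_image hf] using choose_card_two_le_sum (s.image f)

theorem sum_card_filter_lt {α : Type*} [LinearOrder α] (S : Finset α) :
    ∑ b ∈ S, #{a ∈ S | a < b} = (#S).choose 2 := by
  induction S using Finset.induction_on_max with
  | empty => simp
  | insert c s hlt ih =>
    have hcs : c ∉ s := fun h => (hlt c h).false
    have hc : #{a ∈ insert c s | a < c} = #s := by
      rw [filter_insert, if_neg (lt_irrefl c), filter_true_of_mem hlt]
    have hb : ∀ b ∈ s, #{a ∈ insert c s | a < b} = #{a ∈ s | a < b} := fun b hb => by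
      rw [filter_insert, if_neg (hlt b hb).not_gt]
    rw [sum_insert hcs, hc, sum_congr rfl hb, ih, card_insert_of_notMem hcs, Nat.succ_choose_two]

end DistinctNaturals

section Nodal

variable {R : Type*} [CommRing R] {ι : Type*}

theorem Lagrange.coeff_nodal_insert_succ [DecidableEq ι] {s : Finset ι} {v : ι → R} {a : ι}
    (ha : a ∉ s) (k : ℕ) :
    (nodal (insert a s) v).coeff (k + 1) =
      (nodal s v).coeff k - v a * (nodal s v).coeff (k + 1) := by
  rw [nodal_insert_eq_nodal ha, sub_mul, coeff_sub, coeff_X_mul, coeff_C_mul]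

theorem Lagrange.coeff_nodal_card_sub_one (s : Finset ι) (v : ι → R) (hs : 0 < #s) :
    (nodal s v).coeff (#s - 1) = -∑ i ∈ s, v i :=
  prod_X_sub_C_coeff_card_pred s v hs

theorem Lagrange.coeff_nodal_add_one_card_sub_two [DecidableEq ι] {s : Finset ι} (v : ι → R)
    (hs : 2 ≤ #s) :
    (nodal s (fun i => v i + 1)).coeff (#s - 2) =
      (nodal s v).coeff (#s - 2) + (#s - 1) * ∑ i ∈ s, v i + (#s).choose 2 := by
  induction s using Finset.induction_on with
  | empty => simp at hs
  | insert a t ha ih =>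
    rw [card_insert_of_notMem ha] at hs ⊢
    obtain ht | ht := (show #t = 1 ∨ 2 ≤ #t by omega)
    · obtain ⟨b, rfl⟩ := card_eq_one.mp ht
      simp [nodal, coeff_zero_eq_eval_zero, prod_insert ha, sum_insert ha]
      ring
    · obtain ⟨k, hk⟩ : ∃ k, #t = k + 2 := ⟨#t - 2, by omega⟩
      have h1 := coeff_nodal_card_sub_one t v (by omega)
      have h2 := coeff_nodal_card_sub_one t (fun i => v i + 1) (by omega)
      have h3 := ih ht
      rw [hk] at h1 h2 h3 ⊢
      simp only [show k + 2 + 1 - 2 = k + 1 by omega, show k + 2 - 1 = k + 1 by omega,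
        show k + 2 - 2 = k by omega] at h1 h2 h3 ⊢
      rw [coeff_nodal_insert_succ ha, coeff_nodal_insert_succ ha, h1, h2, h3, sum_insert ha,
        sum_add_distrib, sum_const, hk, Nat.succ_choose_two (k + 2)]
      push_cast
      ring

end Nodal

theorem sum_mul_prod_sub_one_div_prod_sub {F : Type*} [Field F] {ι : Type*} [DecidableEq ι]
    {s : Finset ι} {v : ι → F} (hvs : Set.InjOn v s) :
    ∑ i ∈ s, v i * (∏ j ∈ s.erase i, (v i - 1 - v j)) / ∏ j ∈ s.erase i, (v i - v j) =
      ∑ i ∈ s, v i - (#s).choose 2 := by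
  obtain hs | hs | ⟨k, hk⟩ : #s = 0 ∨ #s = 1 ∨ ∃ k, #s = k + 2 :=
    by rcases #s with _ | _ | k <;> simp
  · simp [card_eq_zero.mp hs]
  · obtain ⟨a, rfl⟩ := card_eq_one.mp hs
    simp
  set g := nodal s v
  set g₁ := nodal s (fun i => v i + 1)
  -- `r` has degree `< #s` and takes the value `v i * ∏ j ≠ i, (v i - 1 - v j)` at the node `v i`,
  -- so the sum is its coefficient of `X ^ (#s - 1)`.
  set r := X * (g - g₁) - C (#s : F) * g
  have coeff_r (m : ℕ) : r.coeff (m + 1) = g.coeff m - g₁.coeff m - #s * g.coeff (m + 1) := by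
    simp only [r, coeff_sub, coeff_X_mul, coeff_C_mul]
  have top (w : ι → F) : (nodal s w).coeff (k + 2) = 1 := by
    rw [← hk, ← natDegree_nodal (v := w)]; exact nodal_monic.coeff_natDegree
  have above (w : ι → F) (m : ℕ) (hm : k + 2 < m) : (nodal s w).coeff m = 0 :=
    coeff_eq_zero_of_natDegree_lt (by rwa [natDegree_nodal, hk])
  have second (w : ι → F) : (nodal s w).coeff (k + 1) = -∑ i ∈ s, w i := by
    rw [← coeff_nodal_card_sub_one s w (by omega), hk]; rfl
  have hdeg : r.degree < #s := by
    rw [degree_lt_iff_coeff_zero]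
    intro m hm
    obtain ⟨m, rfl⟩ : ∃ m', m = m' + 1 := ⟨m - 1, by omega⟩
    rw [coeff_r]
    obtain rfl | rfl | hm : m = k + 1 ∨ m = k + 2 ∨ k + 2 < m := by omega
    · rw [second, second, top, sum_add_distrib, sum_const, hk]; simp
    · rw [top, top, above v _ (by omega)]; ring
    · rw [above v _ hm, above _ _ hm, above v _ (by omega)]; ring
  have heval (i) (hi : i ∈ s) : r.eval (v i) = v i * ∏ j ∈ s.erase i, (v i - 1 - v j) := by
    simp only [r, g, g₁, eval_sub, eval_mul, eval_X, eval_C, eval_nodal_at_node hi, eval_nodal,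
      ← mul_prod_erase s _ hi]
    ring_nf
  have hcoeff : r.coeff (#s - 1) = ∑ i ∈ s, v i - (#s).choose 2 := by
    have h2 := coeff_nodal_add_one_card_sub_two v (s := s) (by omega)
    rw [hk, show k + 2 - 2 = k by omega] at h2
    rw [hk, show k + 2 - 1 = k + 1 by omega, coeff_r, h2, second, hk]
    ring
  rw [← hcoeff, Lagrange.coeff_eq_sum hvs hdeg]
  exact sum_congr rfl fun i hi => by rw [heval i hi]

def moveBead (B : Finset ℕ) (x k : ℕ) : Finset ℕ := insert (x - k) (B.erase x)

-- the size of the partition whose β-set is `B`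
def betaSize (B : Finset ℕ) : ℕ := (∑ x ∈ B, x) - (#B).choose 2

def vandermonde (B : Finset ℕ) : ℕ := ∏ b ∈ B, ∏ a ∈ B with a < b, (b - a)

section MoveBead

variable {B : Finset ℕ} {x k : ℕ}

theorem card_moveBead (hx : x ∈ B) (hxk : x - k ∉ B) : #(moveBead B x k) = #B := by
  rw [moveBead, card_insert_of_notMem (fun h => hxk (mem_of_mem_erase h)), card_erase_add_one hx]

theorem sum_moveBead_add (hx : x ∈ B) (hk : k ≤ x) (hxk : x - k ∉ B) :
    (∑ y ∈ moveBead B x k, y) + k = ∑ y ∈ B, y := by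
  rw [moveBead, sum_insert (fun h => hxk (mem_of_mem_erase h)), ← add_sum_erase B _ hx]
  omega

theorem betaSize_moveBead_add (hx : x ∈ B) (hk : k ≤ x) (hxk : x - k ∉ B) :
    betaSize (moveBead B x k) + k = betaSize B := by
  have hle := choose_card_two_le_sum (moveBead B x k)
  have hsum := sum_moveBead_add hx hk hxk
  rw [card_moveBead hx hxk] at hle
  rw [betaSize, betaSize, card_moveBead hx hxk]
  omega

theorem mul_prod_factorial_moveBead (hx : x ∈ B) (hx1 : x - 1 ∉ B) :
    x * ∏ y ∈ moveBead B x 1, y ! = ∏ y ∈ B, y ! := by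
  have hx0 : x ≠ 0 := by rintro rfl; exact hx1 hx
  rw [moveBead, prod_insert (fun h => hx1 (mem_of_mem_erase h)), ← mul_assoc,
    Nat.mul_factorial_pred hx0, mul_prod_erase B _ hx]

end MoveBead

section Vandermonde

variable {R : Type*}

theorem vandermonde_pos (B : Finset ℕ) : 0 < vandermonde B :=
  prod_pos fun _ _ => prod_pos fun _ ha => Nat.sub_pos_of_lt (mem_filter.1 ha).2

theorem cast_vandermonde [CommRing R] (B : Finset ℕ) :
    (vandermonde B : R) = ∏ b ∈ B, ∏ a ∈ B with a < b, ((b : R) - a) := by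
  rw [vandermonde, Nat.cast_prod]
  refine prod_congr rfl fun b _ => ?_
  rw [Nat.cast_prod]
  exact prod_congr rfl fun a ha => Nat.cast_sub (mem_filter.1 ha).2.le

theorem cast_vandermonde_insert [CommRing R] [LinearOrder R] [IsStrictOrderedRing R]
    {t : ℕ} {E : Finset ℕ} (ht : t ∉ E) :
    (vandermonde (insert t E) : R) = vandermonde E * ∏ y ∈ E, |(t : R) - y| := by
  have split_abs (y) (hy : y ∈ E) : |(t : R) - y| =
      (if y < t then (t : R) - y else 1) * (if t < y then (y : R) - t else 1) := by
    rcases lt_or_gt_of_ne (show y ≠ t from fun h => ht (h ▸ hy)) with h | h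
    · simp [h, h.not_gt, h.le]
    · simp [h, h.not_gt, abs_sub_comm (t : R), h.le]
  have new_pairs (b) (_ : b ∈ E) : ∏ a ∈ insert t E with a < b, ((b : R) - a) =
      (if t < b then (b : R) - t else 1) * ∏ a ∈ E with a < b, ((b : R) - a) := by
    rw [filter_insert]
    split_ifs
    · exact prod_insert fun h => ht (mem_filter.1 h).1
    · rw [one_mul]
  rw [prod_congr rfl split_abs, prod_mul_distrib, cast_vandermonde, cast_vandermonde,
    prod_insert ht, filter_insert, if_neg (lt_irrefl t), prod_filter (· < t),
    prod_congr rfl new_pairs, prod_mul_distrib]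
  ring

theorem vandermonde_range (L : ℕ) : vandermonde (range L) = ∏ i ∈ range L, i ! := by
  induction L with
  | zero => rfl
  | succ L ih =>
    have key : ∏ y ∈ range L, |(L : ℚ) - y| = (L ! : ℕ) := by
      rw [← Nat.descFactorial_self, Nat.descFactorial_eq_prod_range, Nat.cast_prod]
      refine prod_congr rfl fun y hy => ?_
      have := mem_range.1 hy
      rw [abs_of_nonneg (by simp [this.le]), Nat.cast_sub this.le]
    rw [← Nat.cast_inj (R := ℚ), range_add_one, cast_vandermonde_insert notMem_range_self, key,
      ih, prod_insert notMem_range_self]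
    push_cast
    ring

theorem cast_vandermonde_moveBead_mul [CommRing R] [LinearOrder R] [IsStrictOrderedRing R]
    {B : Finset ℕ} {x : ℕ} (hx : x ∈ B) (hx1 : x - 1 ∉ B) :
    (vandermonde (moveBead B x 1) : R) * ∏ y ∈ B.erase x, ((x : R) - y) =
      vandermonde B * ∏ y ∈ B.erase x, ((x : R) - 1 - y) := by
  have hx0 : x ≠ 0 := by rintro rfl; exact hx1 hx
  have same_sign (y) (hy : y ∈ B.erase x) :
      |((x - 1 : ℕ) : R) - y| * ((x : R) - y) = |(x : R) - y| * ((x : R) - 1 - y) := by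
    obtain ⟨hyx, hyB⟩ := mem_erase.1 hy
    rw [Nat.cast_sub (by omega), Nat.cast_one]
    rcases lt_or_gt_of_ne (show y ≠ x - 1 by rintro rfl; exact hx1 hyB) with h | h
    · have : (y : R) + 1 < x := by exact_mod_cast (show y + 1 < x by omega)
      rw [abs_of_pos (by linarith), abs_of_pos (by linarith)]; ring
    · have : (x : R) < y := by exact_mod_cast (show x < y by omega)
      rw [abs_of_neg (by linarith), abs_of_neg (by linarith)]; ring
  have hB : vandermonde B = vandermonde (insert x (B.erase x)) := by rw [insert_erase hx]
  rw [moveBead, hB, cast_vandermonde_insert (fun h => hx1 (mem_of_mem_erase h)),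
    cast_vandermonde_insert (notMem_erase x B), mul_assoc, mul_assoc, ← prod_mul_distrib,
    ← prod_mul_distrib, prod_congr rfl same_sign]

end Vandermonde

theorem sum_mul_vandermonde_moveBead (B : Finset ℕ) :
    ∑ x ∈ B with 1 ≤ x ∧ x - 1 ∉ B, x * vandermonde (moveBead B x 1) =
      betaSize B * vandermonde B := by
  have term (x) (hx : x ∈ B) :
      ((if 1 ≤ x ∧ x - 1 ∉ B then x * vandermonde (moveBead B x 1) else 0 : ℕ) : ℚ) =
        vandermonde B * ((x : ℚ) * (∏ y ∈ B.erase x, ((x : ℚ) - 1 - y)) /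
          ∏ y ∈ B.erase x, ((x : ℚ) - y)) := by
    have hne : ∏ y ∈ B.erase x, ((x : ℚ) - y) ≠ 0 :=
      prod_ne_zero_iff.2 fun y hy => sub_ne_zero.2 (by exact_mod_cast (ne_of_mem_erase hy).symm)
    split_ifs with h
    · rw [mul_div_assoc', eq_div_iff hne, Nat.cast_mul, mul_assoc,
        cast_vandermonde_moveBead_mul hx h.2]
      ring
    · rcases eq_or_ne x 0 with rfl | hx0
      · simp
      · have hx1 : x - 1 ∈ B.erase x :=
          mem_erase.2 ⟨by omega, by_contra fun h' => h ⟨by omega, h'⟩⟩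
        rw [prod_eq_zero hx1 (by push_cast [Nat.one_le_iff_ne_zero.2 hx0]; ring)]
        simp
  rw [sum_filter, ← Nat.cast_inj (R := ℚ), Nat.cast_sum, Nat.cast_mul, betaSize,
    Nat.cast_sub (choose_card_two_le_sum B), sum_congr rfl term, ← mul_sum,
    sum_mul_prod_sub_one_div_prod_sub (v := fun n : ℕ => (n : ℚ)) Nat.cast_injective.injOn]
  push_cast
  ring

theorem MN_one_cons (μ : List ℕ) (B : Finset ℕ) :
    MN (1 :: μ) B = ∑ x ∈ B with 1 ≤ x ∧ x - 1 ∉ B, MN μ (moveBead B x 1) := by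
  rw [MN]
  refine sum_congr rfl fun x hx => ?_
  rw [filter_eq_empty_iff.2 fun y _ => by omega, card_empty, pow_zero, one_mul, moveBead]

theorem MN_replicate_one_mul_prod_factorial (B : Finset ℕ) :
    MN (List.replicate (betaSize B) 1) B * ∏ x ∈ B, (x ! : ℤ) =
      (betaSize B)! * vandermonde B := by
  induction hn : betaSize B generalizing B with
  | zero =>
    have hle : ∑ x ∈ B, x ≤ (#B).choose 2 := by rw [betaSize] at hn; omega
    obtain ⟨L, rfl⟩ : ∃ L, B = range L :=
      ⟨_, eq_range_of_sum_eq_choose_card_two (hle.antisymm (choose_card_two_le_sum B))⟩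
    rw [vandermonde_range]
    simp [MN]
  | succ n ih =>
    have term (x) (hx : x ∈ B.filter fun x => 1 ≤ x ∧ x - 1 ∉ B) :
        MN (List.replicate n 1) (moveBead B x 1) * ∏ y ∈ B, (y ! : ℤ) =
          n ! * (x * vandermonde (moveBead B x 1) : ℕ) := by
      obtain ⟨hxB, hx1, hx1B⟩ := mem_filter.1 hx
      have hsize := betaSize_moveBead_add hxB hx1 hx1B
      rw [← Nat.cast_prod, ← mul_prod_factorial_moveBead hxB hx1B, Nat.cast_mul,
        Nat.cast_prod, mul_left_comm, ih _ (by omega)]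
      push_cast
      ring
    rw [List.replicate_succ, MN_one_cons, sum_mul, sum_congr rfl term, ← mul_sum,
      ← Nat.cast_sum, sum_mul_vandermonde_moveBead, hn, Nat.factorial_succ]
    push_cast
    ring

-- `wt r α` unfolds to `abacusWeight r (betaSet α)`.
def abacusWeight (r : ℕ) (B : Finset ℕ) : ℕ :=
  (∑ x ∈ B, x / r) - ∑ j ∈ range r, (#{x ∈ B | x % r = j}).choose 2

section Abacus

variable {r : ℕ} (B : Finset ℕ)

theorem sum_fiberwise_mod {M : Type*} [AddCommMonoid M] (hr : 0 < r) (f : ℕ → M) :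
    ∑ j ∈ range r, ∑ x ∈ B with x % r = j, f x = ∑ x ∈ B, f x :=
  sum_fiberwise_of_maps_to (fun x _ => mem_range.2 (Nat.mod_lt x hr)) f

theorem sum_choose_card_filter_mod_le_sum_div (hr : 0 < r) :
    ∑ j ∈ range r, (#{x ∈ B | x % r = j}).choose 2 ≤ ∑ x ∈ B, x / r := by
  rw [← sum_fiberwise_mod B hr]
  refine sum_le_sum fun j _ => choose_card_two_le_sum_of_injOn fun a ha b hb hab => ?_
  have ha' := (mem_filter.1 ha).2
  have hb' := (mem_filter.1 hb).2
  rw [← Nat.div_add_mod a r, ← Nat.div_add_mod b r, ha', hb']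
  exact congrArg (r * · + j) hab

theorem abacusWeight_add_sum_choose (hr : 0 < r) :
    abacusWeight r B + ∑ j ∈ range r, (#{x ∈ B | x % r = j}).choose 2 = ∑ x ∈ B, x / r :=
  Nat.sub_add_cancel (sum_choose_card_filter_mod_le_sum_div B hr)

theorem abacusWeight_one : abacusWeight 1 B = betaSize B := by
  simp [abacusWeight, betaSize, filter_true_of_mem fun x (_ : x ∈ B) => Nat.mod_one x]

-- The numbers `r * q + j` with `j < r`, `q < n j` are distinct: they are the beads of the
-- `r`-core with `n j` beads on runner `j`.
theorem choose_sum_le_sum_mul_choose_add (hr : 0 < r) (n : ℕ → ℕ) :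
    (∑ j ∈ range r, n j).choose 2 ≤ ∑ j ∈ range r, (r * (n j).choose 2 + j * n j) := by
  have hinj : Set.InjOn (fun jq : Σ _ : ℕ, ℕ => r * jq.2 + jq.1)
      ((range r).sigma fun j => range (n j)) := by
    rintro ⟨j, q⟩ hjq ⟨j', q'⟩ hjq' h
    simp only [coe_sigma, Set.mem_sigma_iff, coe_range, Set.mem_Iio] at hjq hjq' h
    have hmod := congrArg (· % r) h
    have hdiv := congrArg (· / r) h
    simp only [Nat.mul_add_mod, Nat.mod_eq_of_lt hjq.1, Nat.mod_eq_of_lt hjq'.1] at hmod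
    simp only [Nat.mul_add_div hr, Nat.div_eq_of_lt hjq.1, Nat.div_eq_of_lt hjq'.1] at hdiv
    simp only [add_zero] at hdiv
    simp [hmod, hdiv]
  have hle := choose_card_two_le_sum_of_injOn hinj
  simp only [card_sigma, card_range, sum_sigma] at hle
  refine hle.trans (sum_le_sum fun j _ => ?_)
  rw [sum_add_distrib, ← mul_sum, sum_range_id, ← Nat.choose_two_right, sum_const, card_range,
    smul_eq_mul, mul_comm j]

theorem abacusWeight_le (hr : 0 < r) : abacusWeight r B ≤ betaSize B / r := by
  have hcard : #B = ∑ j ∈ range r, #{x ∈ B | x % r = j} :=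
    card_eq_sum_card_fiberwise fun x _ => mem_range.2 (Nat.mod_lt x hr)
  have hmod : ∑ x ∈ B, x % r = ∑ j ∈ range r, j * #{x ∈ B | x % r = j} := by
    rw [← sum_fiberwise_mod B hr]
    refine sum_congr rfl fun j _ => ?_
    rw [sum_congr rfl fun x hx => (mem_filter.1 hx).2, sum_const, smul_eq_mul, mul_comm]
  have hsum : ∑ x ∈ B, x = r * ∑ x ∈ B, x / r + ∑ x ∈ B, x % r := by
    rw [mul_sum, ← sum_add_distrib]
    exact sum_congr rfl fun x _ => (Nat.div_add_mod x r).symm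
  have hcore := choose_sum_le_sum_mul_choose_add hr fun j => #{x ∈ B | x % r = j}
  have hlow := sum_choose_card_filter_mod_le_sum_div B hr
  rw [sum_add_distrib, ← mul_sum, ← hcard, ← hmod] at hcore
  have := Nat.mul_le_mul_left r hlow
  rw [Nat.le_div_iff_mul_le hr, abacusWeight, betaSize, hsum, Nat.sub_mul, mul_comm _ r,
    mul_comm _ r]
  omega

end Abacus

section BetaSet

variable {α : List ℕ}

theorem List.sum_range_getD (l : List ℕ) :
    ∑ i ∈ Finset.range l.length, l.getD i 0 = l.sum := by
  induction l with
  | nil => simp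
  | cons a t ih =>
    rw [length_cons, Finset.sum_range_succ', sum_cons, ← ih, add_comm]
    simp only [getD_cons_succ, getD_cons_zero]

theorem strictAntiOn_betaNumber (hα : α.Pairwise (· ≥ ·)) :
    StrictAntiOn (fun i => α.getD i 0 + (α.length - 1 - i)) (range α.length) := by
  intro i hi j hj hij
  simp only [coe_range, Set.mem_Iio] at hi hj
  have := List.pairwise_iff_getElem.1 hα i j hi hj hij
  simp only [List.getD_eq_getElem _ _ hi, List.getD_eq_getElem _ _ hj]
  omega

theorem card_betaSet (hα : α.Pairwise (· ≥ ·)) : #(betaSet α) = α.length := by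
  rw [betaSet, betaSetN, card_image_of_injOn (strictAntiOn_betaNumber hα).injOn, card_range]

theorem sum_betaSet (hα : α.Pairwise (· ≥ ·)) :
    ∑ x ∈ betaSet α, x = α.sum + α.length.choose 2 := by
  rw [betaSet, betaSetN, sum_image (strictAntiOn_betaNumber hα).injOn, sum_add_distrib,
    List.sum_range_getD, sum_range_reflect (fun i => i), sum_range_id, Nat.choose_two_right]

theorem betaSize_betaSet (hα : α.Pairwise (· ≥ ·)) : betaSize (betaSet α) = α.sum := by
  rw [betaSize, card_betaSet hα, sum_betaSet hα, Nat.add_sub_cancel]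

end BetaSet

section Factorization

variable {p k : ℕ} {B : Finset ℕ}

theorem sum_card_filter_lt_dvd_sub {r : ℕ} (hr : 0 < r) :
    ∑ b ∈ B, #{a ∈ B | a < b ∧ r ∣ b - a} =
      ∑ j ∈ range r, (#{x ∈ B | x % r = j}).choose 2 := by
  rw [← sum_fiberwise_mod B hr]
  refine sum_congr rfl fun j _ => ?_
  rw [← sum_card_filter_lt]
  refine sum_congr rfl fun b hb => ?_
  rw [filter_filter]
  refine congrArg card (filter_congr fun a _ => ?_)
  have hbj : b % r = j := (mem_filter.1 hb).2
  constructor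
  · rintro ⟨hab, hdvd⟩
    exact ⟨hbj ▸ (Nat.modEq_iff_dvd' hab.le).2 hdvd, hab⟩
  · rintro ⟨haj, hab⟩
    exact ⟨hab, (Nat.modEq_iff_dvd' hab.le).1 (haj.trans hbj.symm)⟩

theorem factorization_vandermonde (hp : p.Prime) (hB : ∀ x ∈ B, x < p ^ k) :
    (vandermonde B).factorization p =
      ∑ i ∈ Ico 1 k, ∑ j ∈ range (p ^ i), (#{x ∈ B | x % p ^ i = j}).choose 2 := by
  have hsub (b) (hb : b ∈ B) (a) (ha : a ∈ B.filter (· < b)) :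
      0 < b - a ∧ b - a < p ^ k := by
    have := (mem_filter.1 ha).2; have := hB b hb; omega
  rw [vandermonde, Nat.factorization_prod fun b _ => prod_ne_zero_iff.2 fun a ha =>
    ((hsub _ ‹_› a ha).1).ne', Finsupp.finsetSum_apply]
  calc ∑ b ∈ B, (∏ a ∈ B with a < b, (b - a)).factorization p
        = ∑ b ∈ B, ∑ a ∈ B with a < b, ∑ i ∈ Ico 1 k, if p ^ i ∣ b - a then 1 else 0 := by
        refine sum_congr rfl fun b hb => ?_
        rw [Nat.factorization_prod fun a ha => (hsub b hb a ha).1.ne', Finsupp.finsetSum_apply]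
        refine sum_congr rfl fun a ha => ?_
        rw [Nat.factorization_eq_card_pow_dvd_of_lt hp (hsub b hb a ha).1 (hsub b hb a ha).2,
          card_filter]
    _ = ∑ i ∈ Ico 1 k, ∑ b ∈ B, #{a ∈ B | a < b ∧ p ^ i ∣ b - a} := by
        simp only [← filter_filter, card_filter]
        conv_rhs => rw [sum_comm]
        exact sum_congr rfl fun b _ => sum_comm
    _ = _ := sum_congr rfl fun i _ => sum_card_filter_lt_dvd_sub (pow_pos hp.pos i)

theorem factorization_factorial_of_lt_pow {n : ℕ} (hp : p.Prime) (hn : n < p ^ k) :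
    (n !).factorization p = ∑ i ∈ Ico 1 k, n / p ^ i := by
  rcases eq_or_ne n 0 with rfl | hn0
  · simp
  · exact Nat.factorization_factorial hp (Nat.log_lt_of_lt_pow hn0 hn)

theorem factorization_prod_factorial (hp : p.Prime) (hB : ∀ x ∈ B, x < p ^ k) :
    (∏ x ∈ B, x !).factorization p = ∑ i ∈ Ico 1 k, ∑ x ∈ B, x / p ^ i := by
  rw [Nat.factorization_prod fun x _ => x.factorial_ne_zero, Finsupp.finsetSum_apply, sum_comm]
  exact sum_congr rfl fun x hx => factorization_factorial_of_lt_pow hp (hB x hx)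

theorem factorization_charDegree_add_sum_wt {α : List ℕ} (hp : p.Prime)
    (hα : α.Pairwise (· ≥ ·)) (hn : α.sum < p ^ k) (hB : ∀ x ∈ betaSet α, x < p ^ k) :
    (charDegree α).natAbs.factorization p + ∑ i ∈ Ico 1 k, wt (p ^ i) α =
      ∑ i ∈ Ico 1 k, α.sum / p ^ i := by
  set B := betaSet α
  have hfrob : (charDegree α).natAbs * ∏ x ∈ B, x ! = α.sum ! * vandermonde B := by
    have := congrArg Int.natAbs (MN_replicate_one_mul_prod_factorial B)
    rwa [betaSize_betaSet hα, Int.natAbs_mul, Int.natAbs_mul, ← Nat.cast_prod,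
      Int.natAbs_natCast, Int.natAbs_natCast, Int.natAbs_natCast] at this
  have hvan := (vandermonde_pos B).ne'
  have hc : (charDegree α).natAbs ≠ 0 := by
    rintro h
    rw [h, zero_mul] at hfrob
    exact mul_ne_zero (Nat.factorial_ne_zero _) hvan hfrob.symm
  have hval := congrArg (fun m => m.factorization p) hfrob
  simp only [Nat.factorization_mul hc (prod_ne_zero_iff.2 fun (x : ℕ) _ => x.factorial_ne_zero),
    Nat.factorization_mul (Nat.factorial_ne_zero _) hvan, Finsupp.add_apply,
    factorization_prod_factorial hp hB, factorization_vandermonde hp hB,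
    factorization_factorial_of_lt_pow hp hn] at hval
  have hwt (i : ℕ) := abacusWeight_add_sum_choose B (pow_pos hp.pos i)
  rw [← sum_congr rfl fun i _ => hwt i, sum_add_distrib] at hval
  change _ + ∑ i ∈ Ico 1 k, abacusWeight (p ^ i) B = _
  omega

end Factorization

/-- if `w_{p^m}(α) ≠ d_m = ⌊n / p^m⌋` for some `m`, then
`p` divides the degree of `χ^α`. -/
theorem dvd_degree_of_wt_ne (p n : ℕ) (α : List ℕ) (hp : p.Prime)
    (hα : IsPartitionOf n α) (h : ∃ m : ℕ, wt (p ^ m) α ≠ n / p ^ m) :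
    (p : ℤ) ∣ charDegree α := by
  obtain ⟨⟨hsorted, -⟩, rfl⟩ := hα
  obtain ⟨m, hm⟩ := h
  have wt_le (i : ℕ) : wt (p ^ i) α ≤ α.sum / p ^ i :=
    betaSize_betaSet hsorted ▸ abacusWeight_le _ (pow_pos hp.pos i)
  have hm0 : m ≠ 0 := by
    rintro rfl
    exact hm (by rw [pow_zero, Nat.div_one, ← betaSize_betaSet hsorted]; exact abacusWeight_one _)
  set k := ∑ x ∈ betaSet α, x + m + 1
  have hpk : ∑ x ∈ betaSet α, x < p ^ k :=
    Nat.lt_pow_self hp.one_lt |>.trans_le (Nat.pow_le_pow_right hp.pos (by omega))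
  have hval := factorization_charDegree_add_sum_wt (k := k) hp hsorted
    (by have := sum_betaSet hsorted; omega)
    fun x hx => (single_le_sum (fun _ _ => Nat.zero_le _) hx).trans_lt hpk
  have hlt : ∑ i ∈ Ico 1 k, wt (p ^ i) α < ∑ i ∈ Ico 1 k, α.sum / p ^ i :=
    sum_lt_sum (fun i _ => wt_le i)
      ⟨m, mem_Ico.2 ⟨by omega, by omega⟩, (wt_le m).lt_of_ne hm⟩
  exact Int.natCast_dvd.2 (Nat.dvd_of_factorization_pos (by omega))
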